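/- Under the compositionality hypotheses, if z : S⁺ → ℝ satisfies z(s) = c(s) ∑_{s'∈S⁺} P(s'|s) z(s') for all s ∈ S, and M⁺ : S⁺ × T → ℝ satisfies M⁺(s, τ) = c(s) ∑_{s'∈S⁺} P(s'|s) M⁺(s', τ) for s ∈ S with M⁺(τ', τ) = 𝟙[τ'=τ] for τ', τ ∈ T, then z(s) = ∑_{τ∈T} z(τ) M⁺(s, τ) for all s ∈ S⁺. -/
import Mathlib


open Finset

theorem tr_zero_shot_value_recovery
    (S T : Type) [Fintype S] [Fintype T] [Nonempty S] [Nonempty T] [DecidableEq T]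
    (γ : ℝ) (hγ : γ < 1)
    (c : S → ℝ) (hc : ∀ s, 0 < c s ∧ c s ≤ γ)
    (P : S → (S ⊕ T) → ℝ)
    (hPnonneg : ∀ s x, 0 ≤ P s x)
    (hPsum : ∀ s, ∑ x, P s x = 1)
    (z : (S ⊕ T) → ℝ)
    (hz : ∀ s : S, z (Sum.inl s) = c s * ∑ x, P s x * z x)
    (Mp : (S ⊕ T) → T → ℝ)
    (hMp : ∀ (s : S) (τ : T), Mp (Sum.inl s) τ = c s * ∑ x, P s x * Mp x τ)
    (hMpb : ∀ τ' τ : T, Mp (Sum.inr τ') τ = if τ' = τ then 1 else 0) :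
    ∀ x : S ⊕ T, z x = ∑ τ, z (Sum.inr τ) * Mp x τ := by
  set f : (S ⊕ T) → ℝ := fun x => z x - ∑ τ, z (Sum.inr τ) * Mp x τ with hf
  have hγpos : 0 < γ := lt_of_lt_of_le (hc (Classical.arbitrary S)).1 (hc (Classical.arbitrary S)).2
  have hft : ∀ τ' : T, f (Sum.inr τ') = 0 := by
    intro τ'
    simp [hf, hMpb, mul_ite]
  have hfs : ∀ s : S, f (Sum.inl s) = c s * ∑ x, P s x * f x := by
    intro s
    have key : ∑ τ, z (Sum.inr τ) * (c s * ∑ x, P s x * Mp x τ)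
        = c s * ∑ x, P s x * ∑ τ, z (Sum.inr τ) * Mp x τ := by
      simp_rw [Finset.mul_sum]
      rw [Finset.sum_comm]
      exact Finset.sum_congr rfl fun x _ => Finset.sum_congr rfl fun τ _ => by ring
    simp only [hf]
    rw [hz s]
    simp_rw [hMp]
    rw [key, ← mul_sub, ← Finset.sum_sub_distrib]
    simp_rw [← mul_sub]
  -- sup of |f|
  have hne : (Finset.univ : Finset (S ⊕ T)).Nonempty := Finset.univ_nonempty
  set M : ℝ := Finset.univ.sup' hne (fun x => |f x|) with hM
  have hle : ∀ x, |f x| ≤ M := fun x =>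
    Finset.le_sup' (fun x => |f x|) (Finset.mem_univ x)
  have hMnonneg : 0 ≤ M := le_trans (abs_nonneg _) (hle (Sum.inr (Classical.arbitrary T)))
  have hMle : M ≤ γ * M := by
    rw [hM]
    apply Finset.sup'_le
    intro x _
    cases x with
    | inl s =>
      rw [hfs s, abs_mul, abs_of_pos (hc s).1]
      calc c s * |∑ x, P s x * f x| ≤ c s * ∑ x, |P s x * f x| :=
            mul_le_mul_of_nonneg_left (Finset.abs_sum_le_sum_abs _ _) (hc s).1.le
        _ ≤ c s * ∑ x, P s x * M := by
            apply mul_le_mul_of_nonneg_left _ (hc s).1.le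
            apply Finset.sum_le_sum
            intro x _
            rw [abs_mul, abs_of_nonneg (hPnonneg s x)]
            exact mul_le_mul_of_nonneg_left (hle x) (hPnonneg s x)
        _ = c s * M := by rw [← Finset.sum_mul, hPsum s, one_mul]
        _ ≤ γ * M := mul_le_mul_of_nonneg_right (hc s).2 hMnonneg
    | inr τ => rw [hft τ]; simpa using mul_nonneg hγpos.le hMnonneg
  have hM0 : M ≤ 0 := by nlinarith
  intro x
  have : |f x| ≤ 0 := le_trans (hle x) hM0
  have : f x = 0 := abs_nonpos_iff.mp this
  simpa [hf, sub_eq_zero] using this
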